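/- Let $u : \mathcal{Q} \to \u{\mathcal{Q}}$ be a continuous monotone map between two copies of the unit square $[0,1]^2$, equal to the identity on $\partial\mathcal{Q}$. Then for every closed connected set $\u{C} \subseteq \u{\mathcal{Q}}$ such that $\u{\mathcal{Q}} \setminus \u{C}$ is connected, the set $C = u^{-1}(\u{C}) \subseteq \mathcal{Q}$ is closed, connected, and $\mathcal{Q} \setminus C$ is connected. -/

import Mathlib

/-!
A continuous map `u` of the compact square is closed, so for an open `W` the set of points
whose whole fiber lies in `W` is open: it is the complement of `u (Q \ W)`. If the preimage of a
preconnected set `T` were split by two open sets, each fiber over `T`, being connected, would lie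
in one of them, and the two corresponding open sets of fibers would split `T`. Applied to `C` and
to `Q \ C`, whose preimage is the complement of `u⁻¹(C)` in `Q`, this gives the theorem.
-/

open Set

noncomputable def Qsq : Set (ℝ × ℝ) := Icc (0:ℝ) 1 ×ˢ Icc (0:ℝ) 1

theorem Set.mem_compl_image_diff_iff {α β : Type*} {f : α → β} {s W : Set α} {y : β} :
    y ∈ (f '' (s \ W))ᶜ ↔ s ∩ f ⁻¹' {y} ⊆ W := by
  constructor
  · rintro hy x ⟨hxs, rfl⟩
    by_contra hxW
    exact hy ⟨x, ⟨hxs, hxW⟩, rfl⟩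
  · rintro hy ⟨x, ⟨hxs, hxW⟩, rfl⟩
    exact hxW (hy ⟨hxs, rfl⟩)

section

variable {X Y : Type*} [TopologicalSpace X] [TopologicalSpace Y] {f : X → Y} {s : Set X}
  {t : Set Y}

theorem IsPreconnected.inter_preimage_of_isClosed_image (ht : IsPreconnected t)
    (hs : IsClosed s) (hf : ∀ A ⊆ s, IsClosed A → IsClosed (f '' A)) (hts : t ⊆ f '' s)
    (hfib : ∀ y ∈ t, IsPreconnected (s ∩ f ⁻¹' {y})) : IsPreconnected (s ∩ f ⁻¹' t) := by
  rw [isPreconnected_iff_subset_of_disjoint] at ht ⊢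
  intro U V hU hV hcov hdisj
  have hfib_sub : ∀ y ∈ t, s ∩ f ⁻¹' {y} ⊆ s ∩ f ⁻¹' t := fun y hy =>
    inter_subset_inter_right _ (preimage_mono (singleton_subset_iff.2 hy))
  have hopen : ∀ W, IsOpen W → IsOpen (f '' (s \ W))ᶜ := fun W hW =>
    (hf _ sdiff_subset (hs.sdiff hW)).isOpen_compl
  have htcov : t ⊆ (f '' (s \ U))ᶜ ∪ (f '' (s \ V))ᶜ := by
    intro y hy
    simp only [mem_union, mem_compl_image_diff_iff]
    refine isPreconnected_iff_subset_of_disjoint.1 (hfib y hy) U V hU hV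
      ((hfib_sub y hy).trans hcov) (subset_empty_iff.1 ?_)
    exact hdisj ▸ inter_subset_inter_left _ (hfib_sub y hy)
  have htdisj : t ∩ ((f '' (s \ U))ᶜ ∩ (f '' (s \ V))ᶜ) = ∅ := by
    refine eq_empty_iff_forall_notMem.2 fun y ⟨hy, hyU, hyV⟩ => ?_
    obtain ⟨x, hxs, rfl⟩ := hts hy
    have hx : x ∈ s ∩ f ⁻¹' {f x} := ⟨hxs, rfl⟩
    have : x ∈ s ∩ f ⁻¹' t ∩ (U ∩ V) :=
      ⟨⟨hxs, hy⟩, mem_compl_image_diff_iff.1 hyU hx, mem_compl_image_diff_iff.1 hyV hx⟩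
    exact eq_empty_iff_forall_notMem.1 hdisj x this
  have hpull : ∀ W, t ⊆ (f '' (s \ W))ᶜ → s ∩ f ⁻¹' t ⊆ W := fun W htW x hx =>
    mem_compl_image_diff_iff.1 (htW hx.2) ⟨hx.1, rfl⟩
  exact (ht _ _ (hopen U hU) (hopen V hV) htcov htdisj).imp (hpull U) (hpull V)

theorem IsConnected.inter_preimage_of_isCompact [T2Space Y] (ht : IsConnected t)
    (hs : IsCompact s) (hs' : IsClosed s) (hf : ContinuousOn f s)
    (hfib : ∀ y ∈ t, IsConnected (s ∩ f ⁻¹' {y})) : IsConnected (s ∩ f ⁻¹' t) := by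
  have hts : t ⊆ f '' s := fun y hy => (hfib y hy).nonempty.imp fun _ hx => hx
  refine ⟨?_, ?_⟩
  · obtain ⟨y, hy⟩ := ht.nonempty
    obtain ⟨x, hxs, rfl⟩ := hts hy
    exact ⟨x, hxs, hy⟩
  · refine ht.isPreconnected.inter_preimage_of_isClosed_image hs' (fun A hAs hA => ?_) hts
      fun y hy => (hfib y hy).isPreconnected
    exact ((hs.of_isClosed_subset hA hAs).image_of_continuousOn (hf.mono hAs)).isClosed

end

theorem monotone_preimage_connected_not_disconnecting_general
    (u : ℝ × ℝ → ℝ × ℝ) (hc : ContinuousOn u Qsq) (hmaps : MapsTo u Qsq Qsq)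
    (hmono : ∀ P ∈ Qsq, IsConnected (Qsq ∩ u ⁻¹' {P}))
    (C : Set (ℝ × ℝ)) (hCclosed : IsClosed C) (hCconn : IsConnected C)
    (hCsub : C ⊆ Qsq) (hCcompl : IsConnected (Qsq \ C)) :
    IsClosed (Qsq ∩ u ⁻¹' C) ∧ IsConnected (Qsq ∩ u ⁻¹' C) ∧
      IsConnected (Qsq \ (Qsq ∩ u ⁻¹' C)) := by
  have hQ : IsCompact Qsq := isCompact_Icc.prod isCompact_Icc
  have hQ' : IsClosed Qsq := isClosed_Icc.prod isClosed_Icc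
  have hcompl : Qsq \ (Qsq ∩ u ⁻¹' C) = Qsq ∩ u ⁻¹' (Qsq \ C) := by
    ext x
    simp only [mem_sdiff, mem_inter_iff, mem_preimage]
    exact ⟨fun ⟨hx, hxC⟩ => ⟨hx, hmaps hx, fun h => hxC ⟨hx, h⟩⟩,
      fun ⟨hx, _, hxC⟩ => ⟨hx, fun h => hxC h.2⟩⟩
  refine ⟨hc.preimage_isClosed_of_isClosed hQ' hCclosed, ?_, ?_⟩
  · exact hCconn.inter_preimage_of_isCompact hQ hQ' hc fun P hP => hmono P (hCsub hP)
  · rw [hcompl]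
    exact hCcompl.inter_preimage_of_isCompact hQ hQ' hc fun P hP => hmono P hP.1

/-- **Counter-images of non-disconnecting connected sets under monotone maps.**
Let `u : Q → Q`, `Q = [0,1]²`, be a continuous monotone map (every fiber over a point
of `Q` is a connected subset of `Q`) equal to the identity on `∂Q`.  Then for every closed
connected set `C ⊆ Q` with `Q \ C` connected, the counter-image `u⁻¹(C) ∩ Q` is closed,
connected, and its complement in `Q` is connected. -/
theorem monotone_preimage_connected_not_disconnecting
    (u : ℝ × ℝ → ℝ × ℝ) (hc : ContinuousOn u Qsq) (hmaps : MapsTo u Qsq Qsq)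
    (hbd : ∀ x ∈ frontier Qsq, u x = x)
    (hmono : ∀ P ∈ Qsq, IsConnected (Qsq ∩ u ⁻¹' {P}))
    (C : Set (ℝ × ℝ)) (hCclosed : IsClosed C) (hCconn : IsConnected C)
    (hCsub : C ⊆ Qsq) (hCcompl : IsConnected (Qsq \ C)) :
    IsClosed (Qsq ∩ u ⁻¹' C) ∧ IsConnected (Qsq ∩ u ⁻¹' C) ∧
      IsConnected (Qsq \ (Qsq ∩ u ⁻¹' C)) :=
  monotone_preimage_connected_not_disconnecting_general u hc hmaps hmono C hCclosed hCconn hCsub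
    hCcompl
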